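/- arXiv:2509.15000 — 6 statements merged into one kernel-verified Lean document; each statement's English description precedes it below -/
import Mathlib

section
/- Let G be a locally finite simple graph. Then G is locally 3-edge-connected (i.e., for every edge {x,y} of G there exist three pairwise edge-disjoint paths from x to y in G) if and only if each of its connected components is 3-edge-connected (i.e., for all vertices u, v with v reachable from u in G and for every pair of edges e, f of G, the vertex v is still reachable from u in the graph obtained from G by deleting the edges e and f). -/
/-!
Three pairwise edge-disjoint paths cannot all be hit by two edges, so each edge of a walk survives
the deletion of any two edges. Conversely, after deleting an edge `xy` no further edge separates
`x` from `y`, and two edge-disjoint `x`–`y` paths in the smaller graph together with `xy` give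
three. The two-path statement (Menger's theorem for two edge-disjoint paths) is proved by
induction along a path `u w … v`: from edge-disjoint paths `P₁`, `P₂` from `w` to `v`, follow a
`u`–`v` walk avoiding `uw` up to its first vertex `z` on `P₁ ∪ P₂`, say on `P₁`, and continue
along `P₁` from `z`; the edge `uw` followed by `P₂` is edge-disjoint from it.
-/

open SimpleGraph

namespace SimpleGraph

variable {V : Type*} {G : SimpleGraph V}

theorem Reachable.of_forall_adj {H : SimpleGraph V} (h : ∀ x y, G.Adj x y → H.Reachable x y)
    {u v : V} (huv : G.Reachable u v) : H.Reachable u v := by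
  obtain ⟨p⟩ := huv
  induction p with
  | nil => rfl
  | cons hadj _ ih => exact (h _ _ hadj).trans ih

theorem reachable_deleteEdges_pair_of_edges_disjoint {x y : V} {p₁ p₂ p₃ : G.Walk x y}
    (h₁₂ : p₁.edges.Disjoint p₂.edges) (h₁₃ : p₁.edges.Disjoint p₃.edges)
    (h₂₃ : p₂.edges.Disjoint p₃.edges) (e f : Sym2 V) :
    (G.deleteEdges {e, f}).Reachable x y := by
  have avoid (p : G.Walk x y) (he : e ∉ p.edges) (hf : f ∉ p.edges) :
      (G.deleteEdges {e, f}).Reachable x y :=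
    ⟨p.toDeleteEdges _ (by rintro g hg (rfl | rfl) <;> contradiction)⟩
  by_cases h₁ : e ∉ p₁.edges ∧ f ∉ p₁.edges
  · exact avoid p₁ h₁.1 h₁.2
  by_cases h₂ : e ∉ p₂.edges ∧ f ∉ p₂.edges
  · exact avoid p₂ h₂.1 h₂.2
  refine avoid p₃ ?_ ?_ <;> intro h₃ <;> grind [List.Disjoint]

namespace Walk

variable {u v w z : V}

theorem exists_prefix_first_mem (S : Set V) (p : G.Walk u v) (hv : v ∈ S) :
    ∃ z ∈ S, ∃ q : G.Walk u z, q.edges ⊆ p.edges ∧ ∀ x ∈ q.support, x ≠ z → x ∉ S := by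
  induction p with
  | nil => exact ⟨_, hv, nil, by simp, by simp +contextual⟩
  | @cons a b c hadj p ih =>
    by_cases ha : a ∈ S
    · exact ⟨a, ha, nil, by simp, by simp +contextual⟩
    obtain ⟨z, hz, q, hqp, hqS⟩ := ih hv
    refine ⟨z, hz, cons hadj q, List.cons_subset_cons _ hqp, ?_⟩
    intro x hx hxz
    rw [support_cons, List.mem_cons] at hx
    rcases hx with rfl | hx
    exacts [ha, hqS x hx hxz]

theorem edges_disjoint_of_forall_ne_notMem_support {a b : V} (q : G.Walk u z) (p : G.Walk a b)
    (h : ∀ x ∈ q.support, x ≠ z → x ∉ p.support) : q.edges.Disjoint p.edges := by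
  intro e hq hp
  induction e using Sym2.ind with
  | _ x y =>
  have hx : x = z := by
    by_contra hxz
    exact h x (q.fst_mem_support_of_mem_edges hq) hxz (p.fst_mem_support_of_mem_edges hp)
  have hy : y = z := by
    by_contra hyz
    exact h y (q.snd_mem_support_of_mem_edges hq) hyz (p.snd_mem_support_of_mem_edges hp)
  exact (q.adj_of_mem_edges hq).ne (hx.trans hy.symm)

theorem IsPath.start_notMem_support_dropUntil [DecidableEq V] {p : G.Walk u v} (hp : p.IsPath)
    (hw : w ∈ p.support) (huw : u ≠ w) : u ∉ (p.dropUntil w hw).support := by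
  intro hu
  have hnodup := hp.support_nodup
  rw [← p.take_spec hw, support_append] at hnodup
  rw [← cons_tail_support, List.mem_cons] at hu
  exact List.disjoint_of_nodup_append hnodup (p.takeUntil w hw).start_mem_support
    (hu.resolve_left huw)

end Walk

variable {u v w : V}

open Walk in
theorem exists_edges_disjoint_walks_of_prefix {z : V} {P₁ P₂ : G.Walk w v} (hP₁ : P₁.IsPath)
    (hd : P₁.edges.Disjoint P₂.edges) (hadj : G.Adj u w) {R : G.Walk u z}
    (hz : z ∈ P₁.support) (hR : ∀ x ∈ R.support, x ≠ z → x ∉ P₁.support ∧ x ∉ P₂.support)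
    (hRuw : s(u, w) ∉ R.edges) :
    ∃ A B : G.Walk u v, A.edges.Disjoint B.edges := by
  classical
  set D := P₁.dropUntil z hz
  have hDuw : s(u, w) ∉ D.edges := by
    intro huw
    have hwz : w = z := by
      by_contra hwz
      exact hP₁.start_notMem_support_dropUntil hz hwz (D.snd_mem_support_of_mem_edges huw)
    have huz : u = z := by
      by_contra huz
      exact (hR u R.start_mem_support huz).1
        (P₁.support_dropUntil_subset_support hz (D.fst_mem_support_of_mem_edges huw))
    exact hadj.ne (huz.trans hwz.symm)
  have hRP₂ : R.edges.Disjoint P₂.edges :=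
    R.edges_disjoint_of_forall_ne_notMem_support P₂ fun x hx hxz ↦ (hR x hx hxz).2
  have hDP₂ : D.edges.Disjoint P₂.edges :=
    List.disjoint_of_subset_left (P₁.edges_dropUntil_subset_edges hz) hd
  refine ⟨R.append D, cons hadj P₂, ?_⟩
  rw [edges_append, edges_cons, List.disjoint_cons_right, List.disjoint_append_left,
    List.mem_append, not_or]
  exact ⟨⟨hRuw, hDuw⟩, hRP₂, hDP₂⟩

theorem exists_edges_disjoint_walks_cons {P₁ P₂ : G.Walk w v} (hP₁ : P₁.IsPath) (hP₂ : P₂.IsPath)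
    (hd : P₁.edges.Disjoint P₂.edges) (hadj : G.Adj u w)
    (hreach : (G.deleteEdges {s(u, w)}).Reachable u v) :
    ∃ A B : G.Walk u v, A.edges.Disjoint B.edges := by
  obtain ⟨W, hW⟩ := reachable_deleteEdges_iff_exists_walk.mp hreach
  obtain ⟨z, hz | hz, R, hRW, hR⟩ :=
    W.exists_prefix_first_mem {x | x ∈ P₁.support ∨ x ∈ P₂.support} (.inl P₁.end_mem_support)
  · exact exists_edges_disjoint_walks_of_prefix hP₁ hd hadj hz
      (fun x hx hxz ↦ not_or.mp (hR x hx hxz)) fun h ↦ hW (hRW h)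
  · obtain ⟨A, B, hAB⟩ := exists_edges_disjoint_walks_of_prefix hP₂ hd.symm hadj hz
      (fun x hx hxz ↦ (not_or.mp (hR x hx hxz)).symm) fun h ↦ hW (hRW h)
    exact ⟨B, A, hAB.symm⟩

theorem exists_edges_disjoint_paths_of_isPath {p : G.Walk u v} (hp : p.IsPath)
    (hcut : ∀ f ∈ G.edgeSet, (G.deleteEdges {f}).Reachable u v) :
    ∃ A B : G.Walk u v, A.IsPath ∧ B.IsPath ∧ A.edges.Disjoint B.edges := by
  classical
  induction p with
  | nil => exact ⟨.nil, .nil, .nil, .nil, List.disjoint_nil_left _⟩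
  | @cons u w v hadj q ih =>
    rw [Walk.cons_isPath_iff] at hp
    have hcut' : ∀ f ∈ G.edgeSet, (G.deleteEdges {f}).Reachable w v := by
      intro f hf
      by_cases hfuw : f = s(u, w)
      · subst hfuw
        exact reachable_deleteEdges_iff_exists_walk.mpr
          ⟨q, fun h ↦ hp.2 (q.fst_mem_support_of_mem_edges h)⟩
      · have hwu : (G.deleteEdges {f}).Adj w u := by
          simpa [Sym2.eq_swap, Ne.symm hfuw] using hadj.symm
        exact hwu.reachable.trans (hcut f hf)
    obtain ⟨P₁, P₂, hP₁, hP₂, hd⟩ := ih hp.1 hcut'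
    obtain ⟨A, B, hAB⟩ := exists_edges_disjoint_walks_cons hP₁ hP₂ hd hadj (hcut _ hadj)
    exact ⟨A.bypass, B.bypass, A.bypass_isPath, B.bypass_isPath,
      List.disjoint_of_subset_left A.edges_bypass_subset_edges
        (List.disjoint_of_subset_right B.edges_bypass_subset_edges hAB)⟩

theorem Reachable.exists_edges_disjoint_paths (huv : G.Reachable u v)
    (hcut : ∀ f ∈ G.edgeSet, (G.deleteEdges {f}).Reachable u v) :
    ∃ A B : G.Walk u v, A.IsPath ∧ B.IsPath ∧ A.edges.Disjoint B.edges := by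
  classical
  obtain ⟨p⟩ := huv
  exact exists_edges_disjoint_paths_of_isPath p.bypass_isPath hcut

end SimpleGraph

theorem stmt0_general {V : Type*} (G : SimpleGraph V) :
    (∀ x y : V, G.Adj x y →
      ∃ p₁ p₂ p₃ : G.Walk x y, p₁.IsPath ∧ p₂.IsPath ∧ p₃.IsPath ∧
        List.Disjoint p₁.edges p₂.edges ∧ List.Disjoint p₁.edges p₃.edges ∧
        List.Disjoint p₂.edges p₃.edges) ↔
    (∀ u v : V, G.Reachable u v → ∀ e ∈ G.edgeSet, ∀ f ∈ G.edgeSet,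
      (G.deleteEdges {e, f}).Reachable u v) := by
  constructor
  · intro h3 u v huv e _ f _
    refine huv.of_forall_adj fun x y hxy ↦ ?_
    obtain ⟨p₁, p₂, p₃, -, -, -, h₁₂, h₁₃, h₂₃⟩ := h3 x y hxy
    exact reachable_deleteEdges_pair_of_edges_disjoint h₁₂ h₁₃ h₂₃ e f
  · intro hcut x y hxy
    set H := G.deleteEdges {s(x, y)}
    have hH : H.Reachable x y := by
      simpa using hcut x y hxy.reachable s(x, y) hxy s(x, y) hxy
    have hHcut : ∀ f ∈ H.edgeSet, (H.deleteEdges {f}).Reachable x y := by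
      intro f hf
      rw [deleteEdges_deleteEdges, Set.singleton_union]
      exact hcut x y hxy.reachable s(x, y) hxy f (edgeSet_mono (G.deleteEdges_le _) hf)
    obtain ⟨A, B, hA, hB, hAB⟩ := hH.exists_edges_disjoint_paths hHcut
    have hxy_notMem (p : H.Walk x y) : s(x, y) ∉ p.edges := fun h ↦ by
      simpa [H] using p.edges_subset_edgeSet h
    refine ⟨hxy.toWalk, A.mapLe (G.deleteEdges_le _), B.mapLe (G.deleteEdges_le _),
      hxy.isPath_toWalk, hA.mapLe _, hB.mapLe _, ?_, ?_, ?_⟩ <;>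
      simp [hxy_notMem, hAB]

/-- A locally finite simple graph is locally 3-edge-connected (every edge's
endpoints are joined by three pairwise edge-disjoint paths) iff each of its connected
components is 3-edge-connected (reachability survives deletion of any two edges). -/
theorem stmt0 {V : Type*} (G : SimpleGraph V)
    (hlf : ∀ v : V, (G.neighborSet v).Finite) :
    (∀ x y : V, G.Adj x y →
      ∃ p₁ p₂ p₃ : G.Walk x y, p₁.IsPath ∧ p₂.IsPath ∧ p₃.IsPath ∧
        List.Disjoint p₁.edges p₂.edges ∧ List.Disjoint p₁.edges p₃.edges ∧
        List.Disjoint p₂.edges p₃.edges) ↔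
    (∀ u v : V, G.Reachable u v → ∀ e ∈ G.edgeSet, ∀ f ∈ G.edgeSet,
      (G.deleteEdges {e, f}).Reachable u v) :=
  stmt0_general G
end

section
/- Let G be an infinite, connected, locally finite simple graph with exactly one end and let T be a spanning tree of G. Define the core of T relative to G as the set of edges of T that lie in infinitely many fundamental cycles with respect to T. Then either the core is empty, or every connected component of the graph obtained from T by deleting all edges of the core is finite. -/
/-!
Suppose some edge of `T` lies in the core and some component `C` of `T` minus the core is
infinite. Walking in `T` from `C` to a core edge gives a core edge `ab` with `a ∈ C`, and since
`C` is infinite and locally finite, `a` has a neighbour `v` in `C` behind which `C` is infinite.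

For a tree edge `xy`, the edges of `G` between the two sides of `T - xy` are `xy` itself and the
non-tree edges whose fundamental cycle contains `xy`. So only finitely many edges of `G` join the
two sides of `T - av`, and both sides are infinite: the `v`-side contains the infinite part of
`C`, and the `a`-side contains the `b`-side of `T - ab`, which is infinite because infinitely many
edges of `G` leave it. Deleting the finitely many endpoints of the edges between the sides leaves
an infinite component on each side, and these extend to two different ends of `G`.
-/

open SimpleGraph

/-- The core of a spanning tree `T` relative to `G`: the set of edges of `T` lying in
infinitely many fundamental cycles with respect to `T`. -/
def treeCore {V : Type*} (G T : SimpleGraph V) : Set (Sym2 V) :=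
  {e | e ∈ T.edgeSet ∧
    {f : Sym2 V | f ∈ G.edgeSet ∧ f ∉ T.edgeSet ∧
      ∃ x y : V, f = s(x, y) ∧ ∃ p : T.Walk x y, p.IsPath ∧ e ∈ p.edges}.Infinite}

namespace SimpleGraph

variable {V : Type*}

section Ends

variable {G : SimpleGraph V} [G.LocallyFinite] [Fact G.Preconnected]

lemma exists_componentComplMk_infinite (K : Finset V) {X : Set V} (hX : (X \ K).Infinite) :
    ∃ v, ∃ hv : v ∉ K, v ∈ X ∧ (G.componentComplMk hv).supp.Infinite := by
  have : Finite (G.ComponentCompl K) := G.componentCompl_finite K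
  by_contra! h
  refine hX ((Set.toFinite {C : G.ComponentCompl K | C.supp.Finite}).biUnion
    (fun C hC => hC) |>.subset ?_)
  rintro v ⟨hvX, hvK⟩
  exact Set.mem_biUnion (h v hvK hvX) (G.componentComplMk_mem hvK)

lemma exists_end_apply_eq {K : Finset V} (C : G.ComponentCompl K) (hC : C.supp.Infinite) :
    ∃ e ∈ G.end, e (Opposite.op K) = C := by
  have : Infinite V := Set.infinite_univ_iff.mp (hC.mono (Set.subset_univ _))
  have : ∀ j : (Finset V)ᵒᵖ, Finite (G.componentComplFunctor.obj j) :=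
    fun j => G.componentCompl_finite j.unop
  have : ∀ j : (Finset V)ᵒᵖ, Nonempty (G.componentComplFunctor.obj j) :=
    fun j => G.componentCompl_nonempty_of_infinite j.unop
  -- König's lemma: the inverse system of complement components is Mittag-Leffler.
  have hML : G.componentComplFunctor.IsMittagLeffler :=
    CategoryTheory.Functor.isMittagLeffler_of_exists_finite_range _
      (fun j => ⟨j, CategoryTheory.CategoryStruct.id j, Set.toFinite _⟩)
  have : ∀ j, Nonempty (G.componentComplFunctor.toEventualRanges.obj j) :=
    CategoryTheory.Functor.toEventualRanges_nonempty _ hML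
  obtain ⟨e, he⟩ := CategoryTheory.Functor.eval_section_surjective_of_surjective
    (F := G.componentComplFunctor.toEventualRanges)
    (CategoryTheory.Functor.surjective_toEventualRanges _ hML) (Opposite.op K)
    ⟨C, (G.infinite_iff_in_eventualRange C).mp hC⟩
  exact ⟨_, (G.componentComplFunctor.toEventualRangesSectionsEquiv e).2, congrArg Subtype.val he⟩

theorem not_subsingleton_end_of_finite_boundary (K : Finset V) {A : Set V}
    (hK : ∀ u v, G.Adj u v → u ∈ A → v ∉ A → u ∈ K) (hA : A.Infinite) (hAc : Aᶜ.Infinite) :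
    ¬ G.end.Subsingleton := by
  intro hsub
  obtain ⟨u, hu, huA, hCu⟩ :=
    exists_componentComplMk_infinite (G := G) K (hA.sdiff K.finite_toSet)
  obtain ⟨v, hv, hvA, hCv⟩ :=
    exists_componentComplMk_infinite (G := G) K (hAc.sdiff K.finite_toSet)
  obtain ⟨e, he, heu⟩ := exists_end_apply_eq _ hCu
  obtain ⟨e', he', hev⟩ := exists_end_apply_eq _ hCv
  have huv : G.componentComplMk hu = G.componentComplMk hv := by
    rw [← heu, ← hev, hsub he he']
  obtain ⟨p⟩ := ConnectedComponent.exact huv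
  obtain ⟨d, -, hdA, hdA'⟩ := p.exists_boundary_dart {w | w.1 ∈ A} huA hvA
  exact d.fst.2 (hK _ _ d.adj hdA hdA')

end Ends

lemma infinite_of_infinite_incident {G : SimpleGraph V} [G.LocallyFinite] {F : Set (Sym2 V)}
    {B : Set V} (hF : F.Infinite) (hFG : F ⊆ G.edgeSet) (hFB : ∀ f ∈ F, ∃ z ∈ B, z ∈ f) :
    B.Infinite := by
  classical
  intro hB
  refine hF ((hB.biUnion fun z _ => (G.incidenceSet z).toFinite).subset fun f hf => ?_)
  obtain ⟨z, hzB, hzf⟩ := hFB f hf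
  exact Set.mem_biUnion hzB ⟨hFG hf, hzf⟩

lemma exists_adj_mem_supp_of_deleteEdges {T : SimpleGraph V} (hT : T.Preconnected)
    {S : Set (Sym2 V)} (hS : (S ∩ T.edgeSet).Nonempty) (c : (T.deleteEdges S).ConnectedComponent) :
    ∃ a b, T.Adj a b ∧ s(a, b) ∈ S ∧ a ∈ c.supp := by
  obtain ⟨e, heS, heT⟩ := hS
  induction e using Sym2.ind with | _ x y =>
  by_cases hx : x ∈ c.supp
  · exact ⟨x, y, heT, heS, hx⟩
  obtain ⟨w, hw⟩ := c.nonempty_supp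
  obtain ⟨d, -, hd, hd'⟩ := (hT w x).some.exists_boundary_dart c.supp hw hx
  by_cases hdS : s(d.fst, d.snd) ∈ S
  · exact ⟨d.fst, d.snd, d.adj, hdS, hd⟩
  · exact absurd (c.mem_supp_of_adj_mem_supp hd (deleteEdges_adj.mpr ⟨d.adj, hdS⟩)) hd'

/-- For a tree, the branch at `x` containing its neighbour `y`. -/
def branch (H : SimpleGraph V) (x y : V) : Set V :=
  {z | (H.deleteEdges {s(x, y)}).Reachable z y}

section Branch

variable {H H' T : SimpleGraph V} {a b w x y z u v : V}

lemma branch_mono (h : H ≤ H') : H.branch x y ⊆ H'.branch x y :=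
  fun _ hz => hz.mono (deleteEdges_mono h)

lemma mem_edges_of_mem_branch_of_notMem_branch (p : H.Walk u v) (hu : u ∈ H.branch x y)
    (hv : v ∉ H.branch x y) : s(x, y) ∈ p.edges := by
  by_contra he
  exact hv ((reachable_deleteEdges_iff_exists_walk.mpr ⟨p.reverse, by simpa using he⟩).trans hu)

lemma exists_adj_mem_branch (h : H.Reachable x z) (hne : x ≠ z) :
    ∃ y, H.Adj x y ∧ z ∈ H.branch x y := by
  classical
  obtain ⟨p, hp⟩ := h.some.toPath
  cases p with
  | nil => exact absurd rfl hne
  | cons hxy q =>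
    refine ⟨_, hxy, (reachable_deleteEdges_iff_exists_walk.mpr ⟨q, fun he => ?_⟩).symm⟩
    exact ((Walk.cons_isPath_iff _ _).mp hp).2 (q.fst_mem_support_of_mem_edges he)

lemma exists_adj_branch_infinite {c : H.ConnectedComponent} (hc : c.supp.Infinite)
    (hx : x ∈ c.supp) (hfin : (H.neighborSet x).Finite) :
    ∃ y, H.Adj x y ∧ (H.branch x y).Infinite := by
  by_contra! h
  refine hc (((hfin.biUnion fun y hy => h y hy).insert x).subset fun z hz => ?_)
  rcases eq_or_ne x z with rfl | hne
  · exact Set.mem_insert _ _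
  obtain ⟨y, hy, hzy⟩ := exists_adj_mem_branch (c.reachable_of_mem_supp hx hz) hne
  exact Set.mem_insert_of_mem _ (Set.mem_biUnion hy hzy)

lemma Preconnected.reachable_or_mem_branch (hH : H.Preconnected) (x y z : V) :
    (H.deleteEdges {s(x, y)}).Reachable z x ∨ z ∈ H.branch x y := by
  by_contra! h
  obtain ⟨d, -, hd, hd'⟩ := (hH x z).some.exists_boundary_dart
    {w | (H.deleteEdges {s(x, y)}).Reachable w x ∨ w ∈ H.branch x y} (Or.inl .rfl) (not_or.mpr h)
  by_cases he : s(d.fst, d.snd) = s(x, y)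
  · rcases Sym2.eq_iff.mp he with ⟨-, h⟩ | ⟨-, h⟩
    · exact hd' (Or.inr (h ▸ Reachable.rfl))
    · exact hd' (Or.inl (h ▸ Reachable.rfl))
  · have hadj : (H.deleteEdges {s(x, y)}).Adj d.snd d.fst := deleteEdges_adj.mpr
      ⟨d.adj.symm, fun h => he (Sym2.eq_swap.trans h)⟩
    exact hd' (hd.imp hadj.reachable.trans hadj.reachable.trans)

lemma branch_subset_branch (hab : H.Adj a b) (hbridge : a ∉ H.branch a b)
    (hne : s(a, w) ≠ s(a, b)) : H.branch a b ⊆ H.branch w a := by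
  classical
  intro z hz
  obtain ⟨q, hq⟩ := reachable_deleteEdges_iff_exists_walk.mp hz
  have hzb : (H.deleteEdges {s(w, a)}).Reachable z b := by
    refine reachable_deleteEdges_iff_exists_walk.mpr ⟨q, fun he => hbridge ?_⟩
    have ha := q.snd_mem_support_of_mem_edges he
    exact reachable_deleteEdges_iff_exists_walk.mpr
      ⟨q.dropUntil a ha, fun h => hq (q.edges_dropUntil_subset_edges ha h)⟩
  exact hzb.trans (deleteEdges_adj.mpr
    ⟨hab.symm, fun h => hne (Sym2.eq_swap.trans (h.symm.trans Sym2.eq_swap))⟩).reachable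

namespace IsAcyclic

lemma notMem_branch (hT : T.IsAcyclic) (hxy : T.Adj x y) : x ∉ T.branch x y :=
  isAcyclic_iff_forall_adj_isBridge.mp hT hxy

lemma disjoint_branch (hT : T.IsAcyclic) (hxy : T.Adj x y) :
    Disjoint (T.branch x y) (T.branch y x) := by
  refine Set.disjoint_left.mpr fun z hzy hzx => hT.notMem_branch hxy ?_
  rw [branch, Sym2.eq_swap] at hzx
  exact hzx.symm.trans hzy

lemma mem_branch_of_mem_edges (hT : T.IsAcyclic) (hTc : T.Preconnected) {p : T.Walk u v}
    (hp : p.IsPath) (he : s(x, y) ∈ p.edges) : u ∈ T.branch x y ∨ v ∈ T.branch x y := by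
  classical
  by_contra! h
  obtain ⟨q, hq⟩ := reachable_deleteEdges_iff_exists_walk.mp
    (((hTc.reachable_or_mem_branch x y u).resolve_right h.1).trans
      ((hTc.reachable_or_mem_branch x y v).resolve_right h.2).symm)
  have hpq : p = q.bypass := congrArg Subtype.val ((hT.subsingleton_path u v).elim ⟨p, hp⟩ q.toPath)
  exact hq (q.edges_bypass_subset_edges (hpq ▸ he))

end IsAcyclic

end Branch

end SimpleGraph

section TreeCore

variable {V : Type*} {G T : SimpleGraph V} {x y : V}

lemma infinite_branch_of_mem_treeCore [G.LocallyFinite] (hT : T.IsAcyclic)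
    (hTc : T.Preconnected) (h : s(x, y) ∈ treeCore G T) : (T.branch x y).Infinite := by
  refine infinite_of_infinite_incident h.2 (fun f hf => hf.1) ?_
  rintro _ ⟨-, -, u, v, rfl, p, hp, he⟩
  rcases hT.mem_branch_of_mem_edges hTc hp he with hu | hv
  · exact ⟨u, hu, Sym2.mem_mk_left u v⟩
  · exact ⟨v, hv, Sym2.mem_mk_right u v⟩

lemma finite_boundary_branch_of_notMem_treeCore (hTc : T.Preconnected) (hxy : T.Adj x y)
    (h : s(x, y) ∉ treeCore G T) :
    {u | ∃ v, G.Adj u v ∧ u ∈ T.branch x y ∧ v ∉ T.branch x y}.Finite := by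
  classical
  have hF := Set.not_infinite.mp fun hinf => h ⟨hxy, hinf⟩
  refine ((hF.insert s(x, y)).biUnion fun f _ => f.toFinset.finite_toSet).subset ?_
  rintro u ⟨v, huv, hu, hv⟩
  refine Set.mem_biUnion (x := s(u, v)) ?_ (Sym2.mem_toFinset.mpr (Sym2.mem_mk_left u v))
  by_cases huvT : T.Adj u v
  · refine Or.inl (by_contra fun hne => hv ?_)
    exact (deleteEdges_adj.mpr ⟨huvT.symm, fun h => hne (Sym2.eq_swap.trans h)⟩).reachable.trans hu
  · obtain ⟨p, hp⟩ := (hTc u v).some.toPath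
    exact Or.inr ⟨huv, huvT, u, v, rfl, p, hp, mem_edges_of_mem_branch_of_notMem_branch p hu hv⟩

end TreeCore

theorem stmt4_general {V : Type*} (G : SimpleGraph V)
    (hconn : G.Connected) (hlf : ∀ v : V, (G.neighborSet v).Finite)
    (hend : G.end.Nonempty ∧ G.end.Subsingleton)
    (T : SimpleGraph V) (hTG : T ≤ G) (hTconn : T.Connected) (hTacyc : T.IsAcyclic) :
    treeCore G T = ∅ ∨
      ∀ c : (T.deleteEdges (treeCore G T)).ConnectedComponent, c.supp.Finite := by
  have : G.LocallyFinite := fun v => (hlf v).fintype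
  have : Fact G.Preconnected := ⟨hconn.preconnected⟩
  refine or_iff_not_imp_left.mpr fun hcore c => by_contra fun hc => ?_
  obtain ⟨e, he⟩ := Set.nonempty_iff_ne_empty.mpr hcore
  obtain ⟨a, b, hab, habcore, hac⟩ :=
    exists_adj_mem_supp_of_deleteEdges hTconn.preconnected ⟨e, he, he.1⟩ c
  obtain ⟨v, hav, hv⟩ := exists_adj_branch_infinite hc hac
    ((hlf a).subset fun w hw => hTG (deleteEdges_le _ hw))
  obtain ⟨havT, havcore⟩ := deleteEdges_adj.mp hav
  have hvacore : s(v, a) ∉ treeCore G T := Sym2.eq_swap (a := v) ▸ havcore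
  refine not_subsingleton_end_of_finite_boundary (A := T.branch v a)
    (finite_boundary_branch_of_notMem_treeCore hTconn.preconnected havT.symm hvacore).toFinset
    (fun u w huw hu hw => (Set.Finite.mem_toFinset _).mpr ⟨w, huw, hu, hw⟩) ?_ ?_ hend.2
  · exact (infinite_branch_of_mem_treeCore hTacyc hTconn.preconnected habcore).mono
      (branch_subset_branch hab (hTacyc.notMem_branch hab) fun h => havcore (h ▸ habcore))
  · exact (hv.mono (branch_mono (deleteEdges_le _))).mono
      (hTacyc.disjoint_branch havT).subset_compl_right

/-- For a spanning tree `T` of an infinite, connected, locally finite,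
one-ended graph `G`, either the core of `T` relative to `G` is empty, or every connected
component of `T` minus the core is finite. -/
theorem stmt4 {V : Type*} [Infinite V] (G : SimpleGraph V)
    (hconn : G.Connected) (hlf : ∀ v : V, (G.neighborSet v).Finite)
    (hend : G.end.Nonempty ∧ G.end.Subsingleton)
    (T : SimpleGraph V) (hTG : T ≤ G) (hTconn : T.Connected) (hTacyc : T.IsAcyclic) :
    treeCore G T = ∅ ∨
      ∀ c : (T.deleteEdges (treeCore G T)).ConnectedComponent, c.supp.Finite :=
  stmt4_general G hconn hlf hend T hTG hTconn hTacyc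
end

section
/- Let G be an infinite, connected, locally finite simple graph with exactly one end, and let T be a spanning tree of G whose space of ends is infinite. Call an edge f of G not in T redundant if every vertex of the unique path in T between the endpoints of f (including both endpoints) has degree exactly 2 in T (equivalently, the endpoints of f lie on a common segment of T, a maximal path all of whose vertices have T-degree 2). Then the graph obtained from G by deleting all redundant edges is connected and has exactly one end. -/
/-!
A connected graph in which every vertex has degree 2 has finitely many ends, so `T` has a vertex
`w₀` whose degree is not 2. A walk that leaves a path all of whose vertices have degree 2 must pass
through an endpoint of the path. Hence, if a finite set `Z ⊇ K` contains a `T`-walk from each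
vertex of `K` to `w₀`, then the tree path of a redundant edge with both endpoints outside `Z`
avoids `K`. So, writing `H` for `G` without its redundant edges, every component of `G - Z` lies
inside a component of `H - K`. As `G` is one-ended, one component of `G - Z` is cofinite, hence
so is one of `H - K`, and this makes `H` one-ended.
-/

open CategoryTheory Opposite

namespace SimpleGraph

variable {V : Type*} {G H : SimpleGraph V}

theorem componentComplMk_eq_iff_exists_walk {K : Set V} {x y : V} (hx : x ∉ K) (hy : y ∉ K) :
    G.componentComplMk hx = G.componentComplMk hy ↔ ∃ w : G.Walk x y, ∀ z ∈ w.support, z ∉ K := by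
  constructor
  · intro h
    obtain ⟨w⟩ := ConnectedComponent.exact h
    refine ⟨w.map (Embedding.induce _).toHom, fun z hz => ?_⟩
    obtain ⟨z', -, rfl⟩ := List.mem_map.1 ((Walk.support_map _ _) ▸ hz)
    exact z'.2
  · rintro ⟨w, hw⟩
    exact ConnectedComponent.sound ⟨w.induce _ hw⟩

theorem ComponentCompl.eq_componentComplMk_of_mem {K : Set V} {C : G.ComponentCompl K} {x : V}
    (hx : x ∈ C) : C = G.componentComplMk (ComponentCompl.notMem_of_mem hx) := by
  obtain ⟨_, rfl⟩ := hx
  rfl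

theorem ComponentCompl.exists_supset_of_forall_adj {K Z : Set V} (hKZ : K ⊆ Z)
    (hadj : ∀ ⦃a b⦄ (ha : a ∉ Z) (hb : b ∉ Z), G.Adj a b →
      H.componentComplMk (fun h => ha (hKZ h)) = H.componentComplMk (fun h => hb (hKZ h)))
    (C : G.ComponentCompl Z) : ∃ D : H.ComponentCompl K, (C : Set V) ⊆ D := by
  refine ⟨ComponentCompl.lift _ hadj C, ?_⟩
  induction C using ComponentCompl.ind with | _ hx => ?_
  rintro y ⟨hy, hyx⟩
  rw [← hyx]
  exact H.componentComplMk_mem _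

theorem end_supp_subset_of_subset (e : G.end) {K L : Finset V} (h : K ⊆ L) :
    (e.val (op L)).supp ⊆ (e.val (op K)).supp := by
  rw [← e.prop (opHomOfLE h)]
  exact ComponentCompl.subset_hom _ h

theorem end_supp_infinite (e : G.end) (K : Finset V) : (e.val (op K)).supp.Infinite :=
  (e.val (op K)).infinite_iff_in_all_ranges.2 fun L h => ⟨e.val (op L), e.prop (opHomOfLE h)⟩

theorem end_eval_eq_of_compl_finite (e : G.end) {K : Finset V} {C : G.ComponentCompl K}
    (hC : C.suppᶜ.Finite) : e.val (op K) = C := by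
  obtain ⟨x, hxe, hxC⟩ := ((end_supp_infinite e K).sdiff hC).nonempty
  rw [Set.notMem_compl_iff] at hxC
  exact (ComponentCompl.eq_componentComplMk_of_mem hxe).trans
    (ComponentCompl.eq_componentComplMk_of_mem hxC).symm

theorem end_subsingleton_of_forall_exists_compl_finite
    (h : ∀ K : Finset V, ∃ C : G.ComponentCompl K, C.suppᶜ.Finite) :
    G.end.Subsingleton := by
  intro s hs t ht
  funext K
  obtain ⟨C, hC⟩ := h K.unop
  exact (end_eval_eq_of_compl_finite ⟨s, hs⟩ hC).trans
    (end_eval_eq_of_compl_finite ⟨t, ht⟩ hC).symm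

section LocallyFinite

variable [Infinite V] [LocallyFinite G] [Fact G.Preconnected]

theorem exists_end_eval_eq_of_infinite (K : Finset V) (C : G.ComponentCompl K)
    (hC : C.supp.Infinite) : ∃ e : G.end, e.val (op K) = C := by
  set F := G.componentComplFunctor
  have : ∀ j, Finite (F.obj j) := fun j => G.componentCompl_finite j.unop
  have : ∀ j, Nonempty (F.obj j) := fun j => G.componentCompl_nonempty_of_infinite j.unop
  have hML : F.IsMittagLeffler :=
    F.isMittagLeffler_of_exists_finite_range fun j => ⟨j, 𝟙 j, Set.toFinite _⟩
  have : ∀ j, Nonempty (F.toEventualRanges.obj j) := F.toEventualRanges_nonempty hML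
  obtain ⟨s, hs⟩ := F.toEventualRanges.eval_section_surjective_of_surjective
    (F.surjective_toEventualRanges hML) (op K) ⟨C, (G.infinite_iff_in_eventualRange C).1 hC⟩
  exact ⟨F.toEventualRangesSectionsEquiv s, congrArg Subtype.val hs⟩

theorem end_nonempty : G.end.Nonempty := by
  have : ∀ j : (Finset V)ᵒᵖ, Finite (G.componentComplFunctor.obj j) :=
    fun j => G.componentCompl_finite j.unop
  have : ∀ j : (Finset V)ᵒᵖ, Nonempty (G.componentComplFunctor.obj j) :=
    fun j => G.componentCompl_nonempty_of_infinite j.unop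
  exact nonempty_sections_of_finite_inverse_system G.componentComplFunctor

theorem end_supp_compl_finite_of_subsingleton (hG : G.end.Subsingleton) (e : G.end)
    (K : Finset V) : (e.val (op K)).suppᶜ.Finite := by
  have hfin : ∀ D : {D : G.ComponentCompl K // D ≠ e.val (op K)}, D.1.supp.Finite := by
    rintro ⟨D, hD⟩
    by_contra hinf
    obtain ⟨e', he'⟩ := exists_end_eval_eq_of_infinite K D hinf
    exact hD (he' ▸ congrArg (fun s => s (op K)) (hG e'.2 e.2))
  refine (K.finite_toSet.union (Set.finite_iUnion hfin)).subset fun x hx => ?_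
  by_cases hxK : x ∈ K
  · exact Or.inl hxK
  · refine Or.inr (Set.mem_iUnion.2 ⟨⟨G.componentComplMk hxK, ?_⟩, G.componentComplMk_mem hxK⟩)
    rintro h
    exact hx (h ▸ G.componentComplMk_mem hxK)

end LocallyFinite

theorem Preconnected.exists_finset_walks_to (hG : G.Preconnected) (K : Finset V) (w : V) :
    ∃ Z : Finset V, K ⊆ Z ∧ ∀ k ∈ K, ∃ q : G.Walk k w, ∀ z ∈ q.support, z ∈ Z := by
  classical
  refine ⟨K.biUnion fun k => (hG k w).some.support.toFinset, fun k hk => ?_,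
    fun k hk => ⟨(hG k w).some, fun z hz => ?_⟩⟩
  · exact Finset.mem_biUnion.2 ⟨k, hk, List.mem_toFinset.2 (Walk.start_mem_support _)⟩
  · exact Finset.mem_biUnion.2 ⟨k, hk, List.mem_toFinset.2 hz⟩

namespace Walk.IsPath

variable {u v : V} {p : G.Walk u v}

theorem neighborSet_subset_support (hp : p.IsPath) {x : V} (hx : x ∈ p.support) (hxu : x ≠ u)
    (hxv : x ≠ v) (hdeg : (G.neighborSet x).ncard = 2) :
    G.neighborSet x ⊆ {z | z ∈ p.support} := by
  obtain ⟨i, rfl, hi⟩ := Walk.mem_support_iff_exists_getVert.1 hx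
  have hi0 : i ≠ 0 := by rintro rfl; simp at hxu
  have hil : i < p.length := lt_of_le_of_ne hi (by rintro rfl; simp at hxv)
  have heq : p.toSubgraph.neighborSet (p.getVert i) = G.neighborSet (p.getVert i) :=
    Set.eq_of_subset_of_ncard_le (fun z hz => p.toSubgraph.adj_sub hz)
      (by rw [hdeg, hp.ncard_neighborSet_toSubgraph_internal_eq_two hi0 hil])
      (Set.finite_of_ncard_ne_zero (by rw [hdeg]; norm_num))
  rw [← heq]
  exact fun z hz => p.mem_verts_toSubgraph.1 (p.toSubgraph.edge_vert hz.symm)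

theorem start_or_end_mem_support_of_exit (hp : p.IsPath)
    (hdeg : ∀ z ∈ p.support, (G.neighborSet z).ncard = 2) {x w : V} (q : G.Walk x w)
    (hx : x ∈ p.support) (hw : w ∉ p.support) : u ∈ q.support ∨ v ∈ q.support := by
  obtain ⟨d, hd, hfst, hsnd⟩ := q.exists_boundary_dart {z | z ∈ p.support} hx hw
  have hdq := q.dart_fst_mem_support_of_mem_darts hd
  by_contra! h
  exact hsnd (hp.neighborSet_subset_support hfst (fun he => h.1 (he ▸ hdq))
    (fun he => h.2 (he ▸ hdq)) (hdeg _ hfst) d.adj)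

theorem support_disjoint_of_walks_to (hp : p.IsPath)
    (hdeg : ∀ z ∈ p.support, (G.neighborSet z).ncard = 2) {K Z : Set V} {w : V}
    (hw : w ∉ p.support) (hZ : ∀ k ∈ K, ∃ q : G.Walk k w, ∀ z ∈ q.support, z ∈ Z)
    (hu : u ∉ Z) (hv : v ∉ Z) : ∀ z ∈ p.support, z ∉ K := by
  intro k hk hkK
  obtain ⟨q, hq⟩ := hZ k hkK
  rcases hp.start_or_end_mem_support_of_exit hdeg q hk hw with h | h
  exacts [hu (hq u h), hv (hq v h)]

end Walk.IsPath

theorem end_finite_of_forall_ncard_neighborSet_eq_two (hG : G.Connected)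
    (hdeg : ∀ v, (G.neighborSet v).ncard = 2) : G.end.Finite := by
  classical
  obtain ⟨v₀⟩ := hG.nonempty
  have : LocallyFinite G := fun v =>
    (Set.finite_of_ncard_ne_zero (by rw [hdeg v]; norm_num : (G.neighborSet v).ncard ≠ 0)).fintype
  have : Fact G.Preconnected := ⟨hG.preconnected⟩
  have : Finite (G.componentComplFunctor.obj (op {v₀})) := G.componentCompl_finite _
  rw [← Set.finite_coe_iff]
  -- an end is determined by its component outside `{v₀}`
  refine Finite.of_injective (fun e : G.end => e.val (op {v₀})) fun s t hst =>
    Subtype.ext (funext fun K => ?_)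
  obtain ⟨Z, hKZ, hZ⟩ := hG.preconnected.exists_finset_walks_to K.unop v₀
  obtain ⟨x, hx⟩ := (s.val (op (insert v₀ Z))).nonempty
  obtain ⟨y, hy⟩ := (t.val (op (insert v₀ Z))).nonempty
  have hxZ := ComponentCompl.notMem_of_mem hx
  have hyZ := ComponentCompl.notMem_of_mem hy
  simp only [Finset.coe_insert, Set.mem_insert_iff, not_or] at hxZ hyZ
  have h₀ : {v₀} ⊆ insert v₀ Z := by simp
  have hx₀ := end_supp_subset_of_subset s h₀ hx
  have hy₀ := end_supp_subset_of_subset t h₀ hy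
  have hxy : G.componentComplMk (K := ({v₀} : Finset V)) (by simpa using hxZ.1) =
      G.componentComplMk (K := ({v₀} : Finset V)) (by simpa using hyZ.1) :=
    (ComponentCompl.eq_componentComplMk_of_mem hx₀).symm.trans
      (hst.trans (ComponentCompl.eq_componentComplMk_of_mem hy₀))
  obtain ⟨w, hw⟩ := (componentComplMk_eq_iff_exists_walk _ _).1 hxy
  have hpK := w.toPath.2.support_disjoint_of_walks_to (fun z _ => hdeg z)
    (fun h => hw _ (w.support_toPath_subset_support h) (by simp)) hZ hxZ.2 hyZ.2
  have hKL : K.unop ⊆ insert v₀ Z := hKZ.trans (Finset.subset_insert _ _)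
  rw [ComponentCompl.eq_componentComplMk_of_mem (end_supp_subset_of_subset s hKL hx),
    ComponentCompl.eq_componentComplMk_of_mem (end_supp_subset_of_subset t hKL hy)]
  exact (componentComplMk_eq_iff_exists_walk _ _).2 ⟨_, hpK⟩

end SimpleGraph

open SimpleGraph

theorem stmt7_general {V : Type*} [Infinite V] (G : SimpleGraph V)
    (hconn : G.Connected) (hlf : ∀ v : V, (G.neighborSet v).Finite)
    (hend : G.end.Nonempty ∧ G.end.Subsingleton)
    (T : SimpleGraph V) (hTG : T ≤ G) (hTconn : T.Connected)
    (hTends : T.end.Infinite) :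
    ((G.deleteEdges
        {f : Sym2 V | f ∈ G.edgeSet ∧ f ∉ T.edgeSet ∧
          ∃ u v : V, f = s(u, v) ∧
            ∃ p : T.Walk u v, p.IsPath ∧
              ∀ w ∈ p.support, (T.neighborSet w).ncard = 2}).Connected ∧
      (G.deleteEdges
        {f : Sym2 V | f ∈ G.edgeSet ∧ f ∉ T.edgeSet ∧
          ∃ u v : V, f = s(u, v) ∧
            ∃ p : T.Walk u v, p.IsPath ∧
              ∀ w ∈ p.support, (T.neighborSet w).ncard = 2}).end.Nonempty ∧
      (G.deleteEdges
        {f : Sym2 V | f ∈ G.edgeSet ∧ f ∉ T.edgeSet ∧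
          ∃ u v : V, f = s(u, v) ∧
            ∃ p : T.Walk u v, p.IsPath ∧
              ∀ w ∈ p.support, (T.neighborSet w).ncard = 2}).end.Subsingleton) := by
  set H := G.deleteEdges _
  have hTH : T ≤ H := fun a b hab => (deleteEdges_adj ..).2 ⟨hTG hab, fun hred => hred.2.1 hab⟩
  have : LocallyFinite G := fun v => (hlf v).fintype
  have : LocallyFinite H := fun v => ((hlf v).subset fun _ hx => hx.1).fintype
  have : Fact G.Preconnected := ⟨hconn.preconnected⟩
  have : Fact H.Preconnected := ⟨(hTconn.mono hTH).preconnected⟩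
  refine ⟨hTconn.mono hTH, end_nonempty,
    end_subsingleton_of_forall_exists_compl_finite fun K => ?_⟩
  obtain ⟨w₀, hw₀⟩ : ∃ w, (T.neighborSet w).ncard ≠ 2 := by
    by_contra! h
    exact hTends (end_finite_of_forall_ncard_neighborSet_eq_two hTconn h)
  obtain ⟨Z, hKZ, hZ⟩ := hTconn.preconnected.exists_finset_walks_to K w₀
  obtain ⟨e⟩ := hend.1.to_subtype
  suffices hadj : ∀ ⦃a b⦄ (ha : a ∉ (Z : Set V)) (hb : b ∉ (Z : Set V)), G.Adj a b →
      H.componentComplMk (K := K) (fun h => ha (hKZ h)) =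
        H.componentComplMk (fun h => hb (hKZ h)) by
    obtain ⟨D, hD⟩ := (e.val (op Z)).exists_supset_of_forall_adj (Finset.coe_subset.2 hKZ) hadj
    exact ⟨D, (end_supp_compl_finite_of_subsingleton hend.2 e Z).subset
      (Set.compl_subset_compl.2 hD)⟩
  intro a b ha hb hab
  by_cases hHab : H.Adj a b
  · exact H.componentComplMk_eq_of_adj _ _ hHab
  simp only [H, deleteEdges_adj, hab, true_and, not_not] at hHab
  obtain ⟨-, -, u, v, huv, p, hp, hdeg⟩ := hHab
  have hpK := hp.support_disjoint_of_walks_to hdeg (fun h => hw₀ (hdeg _ h)) hZ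
  rcases Sym2.eq_iff.1 huv with ⟨rfl, rfl⟩ | ⟨rfl, rfl⟩
  · exact (componentComplMk_eq_iff_exists_walk _ _).2 ⟨p.mapLe hTH, by simpa using hpK ha hb⟩
  · exact ((componentComplMk_eq_iff_exists_walk _ _).2
      ⟨p.mapLe hTH, by simpa using hpK hb ha⟩).symm

/-- Let `T` be a spanning tree, with infinitely many ends, of an infinite,
connected, locally finite, one-ended graph `G`. A non-tree edge `s(u, v)` of `G` is
redundant if every vertex of the unique `T`-path between `u` and `v` has `T`-degree
exactly 2. Then deleting all redundant edges from `G` yields a connected graph with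
exactly one end. -/
theorem stmt7 {V : Type*} [Infinite V] (G : SimpleGraph V)
    (hconn : G.Connected) (hlf : ∀ v : V, (G.neighborSet v).Finite)
    (hend : G.end.Nonempty ∧ G.end.Subsingleton)
    (T : SimpleGraph V) (hTG : T ≤ G) (hTconn : T.Connected) (hTacyc : T.IsAcyclic)
    (hTends : T.end.Infinite) :
    ((G.deleteEdges
        {f : Sym2 V | f ∈ G.edgeSet ∧ f ∉ T.edgeSet ∧
          ∃ u v : V, f = s(u, v) ∧
            ∃ p : T.Walk u v, p.IsPath ∧
              ∀ w ∈ p.support, (T.neighborSet w).ncard = 2}).Connected ∧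
      (G.deleteEdges
        {f : Sym2 V | f ∈ G.edgeSet ∧ f ∉ T.edgeSet ∧
          ∃ u v : V, f = s(u, v) ∧
            ∃ p : T.Walk u v, p.IsPath ∧
              ∀ w ∈ p.support, (T.neighborSet w).ncard = 2}).end.Nonempty ∧
      (G.deleteEdges
        {f : Sym2 V | f ∈ G.edgeSet ∧ f ∉ T.edgeSet ∧
          ∃ u v : V, f = s(u, v) ∧
            ∃ p : T.Walk u v, p.IsPath ∧
              ∀ w ∈ p.support, (T.neighborSet w).ncard = 2}).end.Subsingleton) :=
  stmt7_general G hconn hlf hend T hTG hTconn hTends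
end

section
/- Let G be an infinite, connected, locally finite simple graph with exactly one end. Then for every finite set K of vertices and every finite set S of edges, the graph obtained from G by deleting the vertices in K and the edges in S has exactly one infinite connected component, and the set of vertices of G lying outside this infinite component is finite. -/
/-!
Enlarge `K` to a finite set `K₀` containing every endpoint of a deleted edge. Since `G` is
locally finite and connected, `G - K₀` has finitely many components, and by Kőnig's lemma each
infinite one is visited by an end; with a single end, exactly one component `C` is infinite and
everything outside it is finite. No deleted edge lies outside `K₀`, so `C` sits inside a single
component `c` of `(G - S) - K`, whose complement is then finite; any other infinite component
would have to meet `c`.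
-/

open CategoryTheory Opposite

lemma Sym2.finite_coe {α : Type*} (e : Sym2 α) : (e : Set α).Finite := by
  induction e with
  | _ x y => simp

namespace SimpleGraph

variable {V : Type*} (G : SimpleGraph V)

lemma componentCompl_infinite_of_mem_end {e} (he : e ∈ G.end) (K : (Finset V)ᵒᵖ) :
    (e K).supp.Infinite :=
  (e K).infinite_iff_in_all_ranges.mpr fun L h => ⟨e (op L), he (opHomOfLE h)⟩

/-- The component system is Mittag-Leffler (its objects are finite); the infinite components
are its eventual ranges, and every point of an eventual range extends to a section. -/
lemma exists_mem_end_eq_of_infinite [LocallyFinite G] [Fact G.Preconnected] {K : Finset V}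
    {C : G.ComponentCompl K} (hC : C.supp.Infinite) : ∃ e ∈ G.end, e (op K) = C := by
  have : Infinite V := hC.to_subtype.of_injective _ Subtype.val_injective
  let F := G.componentComplFunctor
  have : ∀ j, Finite (F.obj j) := fun j => G.componentCompl_finite j.unop
  have : ∀ j, Nonempty (F.obj j) := fun j => G.componentCompl_nonempty_of_infinite j.unop
  have hML : F.IsMittagLeffler :=
    F.isMittagLeffler_of_exists_finite_range fun j => ⟨j, 𝟙 j, Set.toFinite _⟩
  have : ∀ j, Nonempty (F.toEventualRanges.obj j) := F.toEventualRanges_nonempty hML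
  obtain ⟨s, hs⟩ := F.toEventualRanges.eval_section_surjective_of_surjective
    (F.surjective_toEventualRanges hML) (op K) ⟨C, (G.infinite_iff_in_eventualRange C).mp hC⟩
  exact ⟨_, (F.toEventualRangesSectionsEquiv s).prop, congrArg Subtype.val hs⟩

lemma exists_componentCompl_infinite_compl_finite [LocallyFinite G] [Fact G.Preconnected]
    (hne : G.end.Nonempty) (hsub : G.end.Subsingleton) (K : Finset V) :
    ∃ C : G.ComponentCompl K, C.supp.Infinite ∧ C.suppᶜ.Finite := by
  obtain ⟨e₀, he₀⟩ := hne
  refine ⟨e₀ (op K), G.componentCompl_infinite_of_mem_end he₀ _, ?_⟩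
  have hfin (D : {D : G.ComponentCompl K // D ≠ e₀ (op K)}) : D.1.supp.Finite := by
    by_contra hD
    obtain ⟨e, he, heD⟩ := G.exists_mem_end_eq_of_infinite hD
    exact D.2 (by rw [← heD, hsub he he₀])
  refine (K.finite_toSet.union (Set.finite_iUnion hfin)).subset fun v hv => ?_
  by_cases hvK : v ∈ K
  · exact Or.inl hvK
  · exact Or.inr (Set.mem_iUnion.2 ⟨⟨_, fun h => hv ⟨hvK, h⟩⟩, G.componentComplMk_mem hvK⟩)

def induceHomDeleteEdges {s t : Set V} {S : Set (Sym2 V)} (hst : s ⊆ t)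
    (hS : Disjoint S s.sym2) : G.induce s →g (G.deleteEdges S).induce t where
  toFun := Set.inclusion hst
  map_rel' {v w} h := ⟨h, fun hvw => hS.ne_of_mem hvw.1 (Set.mk_mem_sym2_iff.2 ⟨v.2, w.2⟩) rfl⟩

namespace ConnectedComponent

variable {G}

lemma eq_of_infinite_of_compl_finite {c c' : G.ConnectedComponent} (hc : c.suppᶜ.Finite)
    (hc' : c'.supp.Infinite) : c' = c := by
  obtain ⟨v, hv', hv⟩ := (hc'.sdiff hc).nonempty
  exact eq_of_common_vertex hv' (not_not.1 hv)

end ConnectedComponent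

end SimpleGraph

theorem stmt8_general {V : Type*} (G : SimpleGraph V)
    (hconn : G.Connected) (hlf : ∀ v : V, (G.neighborSet v).Finite)
    (hend : G.end.Nonempty ∧ G.end.Subsingleton) :
    ∀ K : Set V, K.Finite → ∀ S : Set (Sym2 V), S.Finite →
      ∃ c : ((G.deleteEdges S).induce Kᶜ).ConnectedComponent,
        c.supp.Infinite ∧
        (∀ c' : ((G.deleteEdges S).induce Kᶜ).ConnectedComponent,
          c'.supp.Infinite → c' = c) ∧
        (K ∪ (Subtype.val '' c.suppᶜ)).Finite := by
  intro K hK S hS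
  have : G.LocallyFinite := fun v => (hlf v).fintype
  have : Fact G.Preconnected := ⟨hconn.preconnected⟩
  let K₀ : Finset V := (hK.union (hS.biUnion fun e _ => e.finite_coe)).toFinset
  have hKK₀ : K ⊆ K₀ := by simp [K₀]
  have hSK₀ : Disjoint S (K₀ : Set V)ᶜ.sym2 := Set.disjoint_left.2 fun e he heK₀ =>
    Set.mem_sym2_iff_subset.1 heK₀ e.out_fst_mem (by simpa [K₀] using .inr ⟨e, he, e.out_fst_mem⟩)
  obtain ⟨C, hCinf, hCcof⟩ :=
    G.exists_componentCompl_infinite_compl_finite hend.1 hend.2 K₀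
  let c := C.map (G.induceHomDeleteEdges (Set.compl_subset_compl.2 hKK₀) hSK₀)
  have hCc : C.supp ⊆ Subtype.val '' c.supp := by
    rintro v ⟨hv, rfl⟩
    exact ⟨_, rfl, rfl⟩
  have hccof : c.suppᶜ.Finite := by
    refine (hCcof.preimage Subtype.val_injective.injOn).subset fun x hx hxC => hx ?_
    obtain ⟨y, hy, hyx⟩ := hCc hxC
    rwa [← Subtype.val_injective hyx]
  exact ⟨c, (hCinf.mono hCc).of_image _, fun c' => c.eq_of_infinite_of_compl_finite hccof,
    hK.union (hccof.image _)⟩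

/-- If `G` is an infinite, connected, locally finite graph with exactly one
end, then after deleting any finite set `K` of vertices and any finite set `S` of edges,
the resulting graph has exactly one infinite connected component, and the set of vertices
of `G` lying outside this infinite component is finite. -/
theorem stmt8 {V : Type*} [Infinite V] (G : SimpleGraph V)
    (hconn : G.Connected) (hlf : ∀ v : V, (G.neighborSet v).Finite)
    (hend : G.end.Nonempty ∧ G.end.Subsingleton) :
    ∀ K : Set V, K.Finite → ∀ S : Set (Sym2 V), S.Finite →
      ∃ c : ((G.deleteEdges S).induce Kᶜ).ConnectedComponent,
        c.supp.Infinite ∧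
        (∀ c' : ((G.deleteEdges S).induce Kᶜ).ConnectedComponent,
          c'.supp.Infinite → c' = c) ∧
        (K ∪ (Subtype.val '' c.suppᶜ)).Finite :=
  stmt8_general G hconn hlf hend
end

section
/- Let T be an infinite, locally finite tree (a connected acyclic simple graph). Then T has at least two ends (its space of ends has at least two elements) if and only if there exists an edge e of T such that both connected components of the graph T − e (T with the edge e deleted) are infinite. -/
/-!
Two distinct ends are separated by some finite set `K`: they pick different components `C₁ ≠ C₂`
of `G - K`. A path from `C₁` to `C₂` leaves `C₁` through an edge `xy` with `y ∈ K`, and after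
its first exit it never returns to `x`. Deleting `xy` therefore leaves `C₁` attached to `x` and
`C₂` attached to `y`, and both are infinite.

Conversely, in a tree every edge `uv` is a bridge. By König's lemma, each infinite side of `uv`
carries an end whose components all meet that side infinitely. Outside `{u, v}` the two ends
pick different components, since a component meeting both sides would reconnect `u` with `v`
in `T - uv`.
-/

namespace SimpleGraph

variable {V : Type*} {G : SimpleGraph V}

open CategoryTheory in
theorem supp_infinite_of_mem_end {e : (K : (Finset V)ᵒᵖ) → G.componentComplFunctor.obj K}
    (he : e ∈ G.end) (K : (Finset V)ᵒᵖ) : (e K).supp.Infinite :=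
  (e K).infinite_iff_in_all_ranges.mpr fun L h => ⟨e (Opposite.op L), he (opHomOfLE h)⟩

theorem ComponentCompl.reachable_deleteEdges {K : Set V} {C : G.ComponentCompl K}
    {x y w₁ w₂ : V} (hy : y ∈ K) (hw₁ : w₁ ∈ C) (hw₂ : w₂ ∈ C) :
    (G.deleteEdges {s(x, y)}).Reachable w₁ w₂ := by
  obtain ⟨hw₁K, rfl⟩ := hw₁
  obtain ⟨hw₂K, hC⟩ := hw₂
  let f : G.induce Kᶜ →g G.deleteEdges {s(x, y)} :=
    { toFun := Subtype.val
      map_rel' := fun {a b} hab => by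
        refine (deleteEdges_adj ..).mpr ⟨hab, fun hmem => ?_⟩
        rcases Sym2.mem_iff.mp (Set.mem_singleton_iff.mp hmem ▸ Sym2.mem_mk_right x y) with
          rfl | rfl
        exacts [a.prop hy, b.prop hy] }
  exact (ConnectedComponent.exact hC).symm.map f

theorem Walk.IsPath.exists_adj_reachable_deleteEdges {S : Set V} {a b : V} {p : G.Walk a b}
    (hp : p.IsPath) (ha : a ∈ S) (hb : b ∉ S) :
    ∃ x y, x ∈ S ∧ y ∉ S ∧ G.Adj x y ∧ (G.deleteEdges {s(x, y)}).Reachable y b := by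
  induction p with
  | nil => exact absurd ha hb
  | @cons u v w huv q ih =>
    rw [Walk.cons_isPath_iff] at hp
    by_cases hv : v ∈ S
    · exact ih hp.1 hv hb
    · exact ⟨u, v, ha, hv, huv,
        (q.toDeleteEdge _ fun h => hp.2 (q.fst_mem_support_of_mem_edges h)).reachable⟩

theorem ComponentCompl.exists_infinite_inter [LocallyFinite G] [Fact G.Preconnected]
    (K : Finset V) {U : Set V} (hU : U.Infinite) :
    ∃ C : G.ComponentCompl K, (C.supp ∩ U).Infinite := by
  by_contra! hfin
  refine (hU.sdiff K.finite_toSet).mono ?_ (Set.finite_iUnion hfin)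
  rintro w ⟨hwU, hwK⟩
  exact Set.mem_iUnion.mpr ⟨G.componentComplMk hwK, G.componentComplMk_mem hwK, hwU⟩

variable (G) in
open CategoryTheory in
theorem exists_mem_end_forall_infinite_inter [LocallyFinite G] [Fact G.Preconnected]
    {U : Set V} (hU : U.Infinite) :
    ∃ e ∈ G.end, ∀ K : (Finset V)ᵒᵖ, ((e K).supp ∩ U).Infinite := by
  let F : (Finset V)ᵒᵖ ⥤ Type _ :=
    { obj := fun K => {C : G.ComponentCompl K.unop // (C.supp ∩ U).Infinite}
      map := fun f => TypeCat.ofHom fun C => ⟨C.val.hom (leOfHom f.unop),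
        C.prop.mono (Set.inter_subset_inter_left U (C.val.subset_hom _))⟩
      map_id := fun K => ConcreteCategory.hom_ext _ _ fun C => Subtype.ext C.val.hom_refl
      map_comp := fun h h' => ConcreteCategory.hom_ext _ _ fun C =>
        Subtype.ext (C.val.hom_trans (leOfHom h.unop) (leOfHom h'.unop)) }
  have : ∀ K, Nonempty (F.obj K) := fun K =>
    let ⟨C, hC⟩ := ComponentCompl.exists_infinite_inter K.unop hU
    ⟨⟨C, hC⟩⟩
  obtain ⟨s, hs⟩ := nonempty_sections_of_finite_inverse_system F
  exact ⟨fun K => (s K).val, fun f => congrArg Subtype.val (hs f), fun K => (s K).prop⟩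

theorem exists_adj_supp_infinite_of_end_ne (hG : G.Preconnected)
    {e₁ e₂ : (K : (Finset V)ᵒᵖ) → G.componentComplFunctor.obj K}
    (he₁ : e₁ ∈ G.end) (he₂ : e₂ ∈ G.end) (hne : e₁ ≠ e₂) :
    ∃ u v, G.Adj u v ∧
      ((G.deleteEdges {s(u, v)}).connectedComponentMk u).supp.Infinite ∧
      ((G.deleteEdges {s(u, v)}).connectedComponentMk v).supp.Infinite := by
  classical
  obtain ⟨K, hK⟩ := Function.ne_iff.mp hne
  obtain ⟨c₁, hc₁⟩ := (e₁ K).nonempty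
  obtain ⟨c₂, hc₂⟩ := (e₂ K).nonempty
  have hc₂_notMem : c₂ ∉ (e₁ K).supp := fun ⟨_, h⟩ => hK (h.symm.trans hc₂.choose_spec)
  obtain ⟨x, y, hx, hy, hxy, hyc₂⟩ :=
    (hG c₁ c₂).some.toPath.2.exists_adj_reachable_deleteEdges hc₁ hc₂_notMem
  have hyK : y ∈ (K.unop : Set V) := by
    by_contra hyK
    exact hy (ComponentCompl.mem_of_adj x y hx hyK hxy)
  refine ⟨x, y, hxy, (supp_infinite_of_mem_end he₁ K).mono fun w hw => ?_,
    (supp_infinite_of_mem_end he₂ K).mono fun w hw => ?_⟩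
  · exact ConnectedComponent.eq.mpr (ComponentCompl.reachable_deleteEdges hyK hw hx)
  · exact ConnectedComponent.eq.mpr
      ((ComponentCompl.reachable_deleteEdges hyK hw hc₂).trans hyc₂.symm)

theorem exists_end_ne_of_isBridge [LocallyFinite G] [Fact G.Preconnected] {u v : V}
    (huv : G.IsBridge s(u, v))
    (hu : ((G.deleteEdges {s(u, v)}).connectedComponentMk u).supp.Infinite)
    (hv : ((G.deleteEdges {s(u, v)}).connectedComponentMk v).supp.Infinite) :
    ∃ e₁ ∈ G.end, ∃ e₂ ∈ G.end, e₁ ≠ e₂ := by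
  classical
  obtain ⟨e₁, he₁, hUe₁⟩ := exists_mem_end_forall_infinite_inter G hu
  obtain ⟨e₂, he₂, hVe₂⟩ := exists_mem_end_forall_infinite_inter G hv
  refine ⟨e₁, he₁, e₂, he₂, ?_⟩
  rintro rfl
  let K : (Finset V)ᵒᵖ := Opposite.op {u, v}
  have hvK : v ∈ (K.unop : Set V) := by simp [K]
  obtain ⟨a, ha, hau⟩ := (hUe₁ K).nonempty
  obtain ⟨b, hb, hbv⟩ := (hVe₂ K).nonempty
  exact isBridge_iff.mp huv <| (ConnectedComponent.exact hau).symm.trans <|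
    (ComponentCompl.reachable_deleteEdges hvK ha hb).trans (ConnectedComponent.exact hbv)

end SimpleGraph

open SimpleGraph

theorem stmt9_general {V : Type*} (T : SimpleGraph V)
    (hconn : T.Connected) (hacyc : T.IsAcyclic)
    (hlf : ∀ v : V, (T.neighborSet v).Finite) :
    (∃ e₁ ∈ T.end, ∃ e₂ ∈ T.end, e₁ ≠ e₂) ↔
      (∃ u v : V, T.Adj u v ∧
        ((T.deleteEdges {s(u, v)}).connectedComponentMk u).supp.Infinite ∧
        ((T.deleteEdges {s(u, v)}).connectedComponentMk v).supp.Infinite) := by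
  have : T.LocallyFinite := fun v => (hlf v).fintype
  have : Fact T.Preconnected := ⟨hconn.preconnected⟩
  constructor
  · rintro ⟨e₁, he₁, e₂, he₂, hne⟩
    exact exists_adj_supp_infinite_of_end_ne hconn.preconnected he₁ he₂ hne
  · rintro ⟨u, v, huv, hu, hv⟩
    exact exists_end_ne_of_isBridge (isAcyclic_iff_forall_adj_isBridge.mp hacyc huv) hu hv

/-- An infinite, locally finite tree `T` has at least two ends iff there is
an edge `e = s(u, v)` of `T` such that both connected components of `T − e` (the one of
`u` and the one of `v`) are infinite. -/
theorem stmt9 {V : Type*} [Infinite V] (T : SimpleGraph V)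
    (hconn : T.Connected) (hacyc : T.IsAcyclic)
    (hlf : ∀ v : V, (T.neighborSet v).Finite) :
    (∃ e₁ ∈ T.end, ∃ e₂ ∈ T.end, e₁ ≠ e₂) ↔
      (∃ u v : V, T.Adj u v ∧
        ((T.deleteEdges {s(u, v)}).connectedComponentMk u).supp.Infinite ∧
        ((T.deleteEdges {s(u, v)}).connectedComponentMk v).supp.Infinite) :=
  stmt9_general T hconn hacyc hlf
end

section
/- Let G be a finite, connected simple graph that is 3-edge-connected (for every pair of edges e, f of G, the graph obtained from G by deleting e and f is still connected), and let w be a function assigning a nonnegative real weight to each edge of G. Then there exists a spanning tree T of G with ∑_{e ∈ E(T)} w(e) ≤ (2/3) ∑_{e ∈ E(G)} w(e). -/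
/-!
Run the reverse-delete algorithm on the edges in order of decreasing weight: an edge is deleted
whenever the graph stays connected without it, so the kept edges contain a spanning tree. Among
the first `t` edges, each kept one is a bridge of what remains, so deleting all `t` of them leaves
more components than there are kept edges. In a `k`-edge-connected graph each component is incident
to at least `k` of the deleted edges and each edge to at most two components, which gives
`(k - 2) t ≤ k · #(deleted among the first t)`. As the weights decrease, summation by parts turns
these prefix bounds into `(k - 2) w(E) ≤ k w(B)` for the set `B` of deleted edges, so a spanning
tree of `G - B` weighs at most `(2 / k) w(E)`.
-/

open Finset

namespace Finset

theorem exists_image_range_eq_antitoneOn {α β : Type*} [DecidableEq α] [Nonempty α] [LinearOrder β]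
    (f : α → β) (s : Finset α) :
    ∃ e : ℕ → α, (range #s).image e = s ∧ AntitoneOn (f ∘ e) (range #s) := by
  induction s using Finset.induction_on_min_value f with
  | empty => exact ⟨fun _ ↦ Classical.arbitrary α, by simp, by simp [AntitoneOn]⟩
  | insert a s ha hmin ih =>
    obtain ⟨e, he, hanti⟩ := ih
    have hlt : ∀ i ∈ range #s, Function.update e #s a i = e i := fun i hi ↦
      Function.update_of_ne (mem_range.mp hi).ne _ _
    refine ⟨Function.update e #s a, ?_, ?_⟩
    · rw [card_insert_of_notMem ha, range_add_one, image_insert, Function.update_self,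
        image_congr hlt, he]
    · rw [card_insert_of_notMem ha, range_add_one, coe_insert]
      rintro i (rfl | hi) j (rfl | hj) hij
      · exact le_rfl
      · exact absurd hij (by simpa using hj)
      · simpa [hlt i hi] using hmin _ (he ▸ mem_image_of_mem e hi)
      · simpa [hlt i hi, hlt j hj] using hanti hi hj hij

theorem sum_range_mul_nonneg_of_antitoneOn {R : Type*} [CommRing R] [LinearOrder R]
    [IsStrictOrderedRing R] {a x : ℕ → R} {n : ℕ} (ha : AntitoneOn a (range n))
    (ha₀ : ∀ i < n, 0 ≤ a i) (hx : ∀ t ≤ n, 0 ≤ ∑ i ∈ range t, x i) :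
    0 ≤ ∑ i ∈ range n, a i * x i := by
  rcases n with _ | n
  · simp
  have := sum_range_by_parts a x (n + 1)
  simp only [smul_eq_mul, add_tsub_cancel_right] at this
  rw [this]
  refine sub_nonneg.mpr ((sum_nonpos fun i hi ↦ ?_).trans (mul_nonneg (ha₀ n n.lt_succ_self)
    (hx _ le_rfl)))
  have hi : i < n := mem_range.mp hi
  exact mul_nonpos_of_nonpos_of_nonneg
    (sub_nonpos.mpr (ha (by simp; omega) (by simp; omega) (by omega)))
    (hx _ (by omega))

theorem sum_eq_sum_range_card_sub_mul {α R : Type*} [DecidableEq α] [CommRing R]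
    {s : ℕ → Finset α} {e : ℕ → α} (h₀ : s 0 = ∅)
    (hs : ∀ i, s (i + 1) = s i ∨ s (i + 1) = insert (e i) (s i)) (f : α → R) (n : ℕ) :
    ∑ x ∈ s n, f x = ∑ i ∈ range n, ((#(s (i + 1)) : R) - #(s i)) * f (e i) := by
  induction n with
  | zero => simp [h₀]
  | succ n ih =>
    rw [sum_range_succ, ← ih]
    rcases hs n with h | h
    · simp [h]
    · by_cases hn : e n ∈ s n
      · simp [h, insert_eq_of_mem hn]
      · rw [h, sum_insert hn, card_insert_of_notMem hn]
        push_cast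
        ring

end Finset

namespace SimpleGraph

variable {V : Type*} {G : SimpleGraph V} {k : ℕ}

theorem ConnectedComponent.card_lt_card_of_le_of_not_reachable [Finite V] {G' : SimpleGraph V}
    (h : G ≤ G') {u v : V} (huv : G'.Reachable u v) (hnuv : ¬G.Reachable u v) :
    Nat.card G'.ConnectedComponent < Nat.card G.ConnectedComponent := by
  have := Fintype.ofFinite G.ConnectedComponent
  have := Fintype.ofFinite G'.ConnectedComponent
  simp only [Nat.card_eq_fintype_card]
  refine Fintype.card_lt_of_surjective_not_injective _ (surjective_map_ofLE h) fun hinj ↦ hnuv ?_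
  exact ConnectedComponent.exact (@hinj (G.connectedComponentMk u) (G.connectedComponentMk v)
    (ConnectedComponent.sound huv))

theorem card_connectedComponent_add_card_le_of_isBridge [Finite V] (F : Finset (Sym2 V))
    (hF : ∀ f ∈ F, f ∈ G.edgeSet ∧ G.IsBridge f) :
    Nat.card G.ConnectedComponent + #F ≤ Nat.card (G.deleteEdges F).ConnectedComponent := by
  classical
  induction F using Finset.induction_on with
  | empty => simp
  | insert f F hf ih =>
    obtain ⟨hfE, hfbridge⟩ := hF f (mem_insert_self f F)
    induction f with | h u v =>
    have hreach : (G.deleteEdges F).Reachable u v :=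
      (deleteEdges_adj.mpr ⟨hfE, by simpa using hf⟩).reachable
    have hnreach : ¬(G.deleteEdges ↑(insert s(u, v) F)).Reachable u v := fun h ↦
      isBridge_iff.mp hfbridge (h.mono (deleteEdges_anti (by simp)))
    have := ConnectedComponent.card_lt_card_of_le_of_not_reachable
      (deleteEdges_anti (by simp)) hreach hnreach
    have := ih fun g hg ↦ hF g (mem_insert_of_mem hg)
    rw [card_insert_of_notMem hf]
    omega

theorem IsEdgeConnected.le_card_filter_mem_supp (hk : G.IsEdgeConnected k) (S : Finset (Sym2 V))
    (C : (G.deleteEdges S).ConnectedComponent) {u v : V} (hu : u ∈ C.supp) (hv : v ∉ C.supp)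
    [DecidablePred fun f : Sym2 V ↦ ∃ x ∈ f, x ∈ C.supp] :
    k ≤ #{f ∈ S | ∃ x ∈ f, x ∈ C.supp} := by
  by_contra! hlt
  set b := {f ∈ S | ∃ x ∈ f, x ∈ C.supp}
  obtain ⟨p⟩ := hk u v (s := b) (by simpa using hlt)
  obtain ⟨d, -, hd₁, hd₂⟩ := p.exists_boundary_dart C.supp hu hv
  obtain ⟨hdG, hdb⟩ := deleteEdges_adj.mp d.adj
  refine hdb (mem_filter.mpr ⟨?_, d.fst, Sym2.mem_mk_left _ _, hd₁⟩)
  by_contra hdS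
  rw [ConnectedComponent.mem_supp_iff] at hd₁ hd₂
  exact hd₂ (hd₁ ▸ (ConnectedComponent.connectedComponentMk_eq_of_adj
    (deleteEdges_adj.mpr ⟨hdG, hdS⟩)).symm)

theorem IsEdgeConnected.mul_card_connectedComponent_le [Finite V] (hk : G.IsEdgeConnected k)
    (S : Finset (Sym2 V)) (hS : 1 < Nat.card (G.deleteEdges S).ConnectedComponent) :
    k * Nat.card (G.deleteEdges S).ConnectedComponent ≤ 2 * #S := by
  classical
  set K := G.deleteEdges S
  have := Fintype.ofFinite K.ConnectedComponent
  have : Nontrivial K.ConnectedComponent := Finite.one_lt_card_iff_nontrivial.mp hS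
  have key := card_mul_le_card_mul (s := univ) (t := S) (m := k) (n := 2)
    (fun (C : K.ConnectedComponent) f ↦ ∃ x ∈ f, x ∈ C.supp) (fun C _ ↦ ?_) (fun f _ ↦ ?_)
  · rw [card_univ, ← Nat.card_eq_fintype_card] at key
    linarith
  · obtain ⟨D, hD⟩ := exists_ne C
    obtain ⟨u, hu⟩ := C.nonempty_supp
    obtain ⟨v, rfl⟩ := D.nonempty_supp
    exact hk.le_card_filter_mem_supp S C hu fun hv ↦ hD ((C.mem_supp_iff v).mp hv)
  · induction f with | h u v =>
    refine (card_le_card (t := {K.connectedComponentMk u, K.connectedComponentMk v})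
      fun C hC ↦ ?_).trans card_le_two
    obtain ⟨x, hx, hxC⟩ := (mem_filter.mp hC).2
    rw [ConnectedComponent.mem_supp_iff] at hxC
    rcases Sym2.mem_iff.mp hx with rfl | rfl <;> simp [hxC]

theorem isEdgeConnected_three_of_connected_deleteEdges_pair (hG : G.Connected)
    (h : ∀ e ∈ G.edgeSet, ∀ f ∈ G.edgeSet, (G.deleteEdges {e, f}).Connected) :
    G.IsEdgeConnected 3 := by
  rw [isEdgeConnected_add_one two_ne_zero]
  intro e
  rw [isEdgeConnected_two]
  intro f
  rw [deleteEdges_deleteEdges, deleteEdges_eq_inter_edgeSet]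
  refine Connected.preconnected ?_
  by_cases he : e ∈ G.edgeSet <;> by_cases hf : f ∈ G.edgeSet
  · exact (h e he f hf).mono (deleteEdges_anti (by grind))
  · exact (h e he e he).mono (deleteEdges_anti (by grind))
  · exact (h f hf f hf).mono (deleteEdges_anti (by grind))
  · exact (deleteEdges_empty (G := G) ▸ hG).mono (deleteEdges_anti (by grind))

section ReverseDelete

variable [DecidableEq V] (G) (e : ℕ → Sym2 V)

open Classical in
/-- The edges deleted after scanning `e 0, …, e (t - 1)`; the graph the algorithm outputs is
`G.deleteEdges (G.reverseDelete e t)`. -/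
noncomputable def reverseDelete : ℕ → Finset (Sym2 V)
  | 0 => ∅
  | t + 1 =>
    if (G.deleteEdges ↑(insert (e t) (reverseDelete t))).Connected then
      insert (e t) (reverseDelete t)
    else reverseDelete t

@[simp] theorem reverseDelete_zero : G.reverseDelete e 0 = ∅ := rfl

theorem reverseDelete_succ_eq_or (t : ℕ) :
    G.reverseDelete e (t + 1) = G.reverseDelete e t ∨
      G.reverseDelete e (t + 1) = insert (e t) (G.reverseDelete e t) := by
  rw [reverseDelete]
  split_ifs <;> simp

theorem reverseDelete_mono : Monotone (G.reverseDelete e) :=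
  monotone_nat_of_le_succ fun t ↦ by
    rcases G.reverseDelete_succ_eq_or e t with h | h <;> rw [h]
    exact subset_insert _ _

theorem reverseDelete_subset_image (t : ℕ) : G.reverseDelete e t ⊆ (range t).image e := by
  induction t with
  | zero => simp
  | succ t ih =>
    rw [range_add_one, image_insert]
    rcases G.reverseDelete_succ_eq_or e t with h | h <;> rw [h]
    · exact ih.trans (subset_insert _ _)
    · exact insert_subset_insert _ ih

variable {G e}

theorem Connected.deleteEdges_reverseDelete (hG : G.Connected) (t : ℕ) :
    (G.deleteEdges ↑(G.reverseDelete e t)).Connected := by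
  induction t with
  | zero => simpa using hG
  | succ t ih =>
    rw [reverseDelete]
    split_ifs with h
    exacts [h, ih]

theorem not_connected_deleteEdges_insert_reverseDelete {i t : ℕ} (hit : i < t)
    (hi : e i ∉ G.reverseDelete e t) :
    ¬(G.deleteEdges ↑(insert (e i) (G.reverseDelete e t))).Connected := by
  have hi' : e i ∉ G.reverseDelete e (i + 1) := fun h ↦ hi (reverseDelete_mono G e hit h)
  rw [reverseDelete] at hi'
  split_ifs at hi' with hrej
  · exact absurd (mem_insert_self _ _) hi'
  · refine fun h ↦ hrej (h.mono (deleteEdges_anti ?_))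
    exact_mod_cast insert_subset_insert _ (reverseDelete_mono G e hit.le)

/-- `(k - 2) · #(first t edges) ≤ k · #(deleted ones)`, written without subtraction in `ℕ`. -/
theorem IsEdgeConnected.mul_card_le_reverseDelete [Finite V] (hG : G.Connected)
    (hk : G.IsEdgeConnected k) {t : ℕ} (he : ∀ i < t, e i ∈ G.edgeSet) :
    k * #((range t).image e) ≤ k * #(G.reverseDelete e t) + 2 * #((range t).image e) := by
  set P := (range t).image e
  set B := G.reverseDelete e t
  have hBP : B ⊆ P := G.reverseDelete_subset_image e t
  set H := G.deleteEdges B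
  have hH : H.Connected := hG.deleteEdges_reverseDelete t
  have hbridge : ∀ f ∈ P \ B, f ∈ H.edgeSet ∧ H.IsBridge f := by
    intro f hf
    obtain ⟨hfP, hfB⟩ := mem_sdiff.mp hf
    obtain ⟨i, hi, rfl⟩ := mem_image.mp hfP
    refine ⟨by rw [edgeSet_deleteEdges]; exact ⟨he i (mem_range.mp hi), hfB⟩, ?_⟩
    induction h : e i with | h u v =>
    by_contra hnb
    refine not_connected_deleteEdges_insert_reverseDelete (mem_range.mp hi) hfB ?_
    rw [h, coe_insert, Set.insert_eq, Set.union_comm, ← deleteEdges_deleteEdges]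
    exact hH.connected_delete_edge_of_not_isBridge hnb
  have hcount := card_connectedComponent_add_card_le_of_isBridge (P \ B) hbridge
  rw [deleteEdges_deleteEdges, coe_sdiff, Set.union_sdiff_cancel (by exact_mod_cast hBP)] at hcount
  have := hG.nonempty
  have : 0 < Nat.card H.ConnectedComponent := Nat.card_pos
  have hPB : #P = #(P \ B) + #B := (card_sdiff_add_card_eq_card hBP).symm
  rcases (P \ B).eq_empty_or_nonempty with hF | hF
  · rw [hPB, hF, card_empty, zero_add]
    omega
  have := hk.mul_card_connectedComponent_le P (by have := hF.card_pos; omega)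
  nlinarith

theorem IsEdgeConnected.sub_two_mul_sum_le_mul_sum_reverseDelete [Finite V] (hG : G.Connected)
    (hk : G.IsEdgeConnected k) {m : ℕ} (he : ∀ i < m, e i ∈ G.edgeSet)
    (hinj : Set.InjOn e (range m)) (w : Sym2 V → ℝ) (hw : AntitoneOn (w ∘ e) (range m))
    (hw₀ : ∀ i < m, 0 ≤ w (e i)) :
    (k - 2) * ∑ i ∈ range m, w (e i) ≤ k * ∑ f ∈ G.reverseDelete e m, w f := by
  set B := G.reverseDelete e
  -- `d i` is `1` if `e i` is deleted at step `i` and `0` otherwise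
  set d : ℕ → ℝ := fun i ↦ #(B (i + 1)) - #(B i)
  have hprefix : ∀ t ≤ m, 0 ≤ ∑ i ∈ range t, (k * d i - (k - 2)) := by
    intro t ht
    have hcard : #((range t).image e) = t := by
      rw [card_image_of_injOn (hinj.mono (by simpa using range_subset_range.mpr ht)), card_range]
    have hbound := hk.mul_card_le_reverseDelete hG (t := t) fun i hi ↦ he i (by omega)
    rw [hcard] at hbound
    have hbound' : (k : ℝ) * t ≤ k * #(B t) + 2 * t := by exact_mod_cast hbound
    rw [sum_sub_distrib, ← mul_sum, sum_range_sub (fun i ↦ (#(B i) : ℝ))]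
    simp only [sum_const, card_range, nsmul_eq_mul]
    simp only [B, reverseDelete_zero, card_empty, CharP.cast_eq_zero]
    linarith
  have habel := sum_range_mul_nonneg_of_antitoneOn hw hw₀ hprefix
  have hsplit : ∑ i ∈ range m, (w ∘ e) i * (k * d i - (k - 2)) =
      k * ∑ i ∈ range m, d i * w (e i) - (k - 2) * ∑ i ∈ range m, w (e i) := by
    rw [mul_sum, mul_sum, ← sum_sub_distrib]
    exact sum_congr rfl fun i _ ↦ by simp only [Function.comp_apply]; ring
  rw [sum_eq_sum_range_card_sub_mul (reverseDelete_zero G e) (G.reverseDelete_succ_eq_or e) w m]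
  linarith

end ReverseDelete

theorem IsEdgeConnected.exists_isTree_le_mul_sum_le [Finite V] (hG : G.Connected)
    (hk : G.IsEdgeConnected k) (w : Sym2 V → ℝ) (hw : ∀ e ∈ G.edgeSet, 0 ≤ w e) :
    ∃ T ≤ G, T.IsTree ∧ k * ∑ᶠ e ∈ T.edgeSet, w e ≤ 2 * ∑ᶠ e ∈ G.edgeSet, w e := by
  classical
  obtain ⟨v⟩ := hG.nonempty
  have : Nonempty (Sym2 V) := ⟨s(v, v)⟩
  have := Fintype.ofFinite V
  obtain ⟨e, hE, hanti⟩ := exists_image_range_eq_antitoneOn w G.edgeFinset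
  set m := #G.edgeFinset
  have hinj : Set.InjOn e (range m) := injOn_of_card_image_eq (by rw [hE, card_range])
  have he : ∀ i < m, e i ∈ G.edgeSet := fun i hi ↦
    mem_edgeFinset.mp (hE ▸ mem_image_of_mem e (mem_range.mpr hi))
  have hBE : G.reverseDelete e m ⊆ G.edgeFinset := hE ▸ G.reverseDelete_subset_image e m
  have hwB := hk.sub_two_mul_sum_le_mul_sum_reverseDelete hG he hinj w hanti
    fun i hi ↦ hw _ (he i hi)
  rw [← sum_image hinj, hE] at hwB
  obtain ⟨T, hTle, hT⟩ := (hG.deleteEdges_reverseDelete (e := e) m).exists_isTree_le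
  refine ⟨T, hTle.trans (deleteEdges_le _), hT, ?_⟩
  have hTE : T.edgeFinset ⊆ G.edgeFinset \ G.reverseDelete e m := by
    intro f hf
    have := edgeSet_mono hTle (mem_edgeFinset.mp hf)
    rw [edgeSet_deleteEdges] at this
    simpa using this
  have hwT : ∑ f ∈ T.edgeFinset, w f ≤ ∑ f ∈ G.edgeFinset \ G.reverseDelete e m, w f :=
    sum_le_sum_of_subset_of_nonneg hTE fun f hf _ ↦ hw f (mem_edgeFinset.mp (mem_sdiff.mp hf).1)
  rw [sum_sdiff_eq_sub hBE] at hwT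
  rw [← coe_edgeFinset T, ← coe_edgeFinset G, finsum_mem_coe_finset, finsum_mem_coe_finset]
  nlinarith [mul_le_mul_of_nonneg_left hwT k.cast_nonneg]

end SimpleGraph

open SimpleGraph

/-- A finite, connected, 3-edge-connected simple graph with nonnegative
edge weights admits a spanning tree whose total weight is at most 2/3 of the total weight
of the graph. -/
theorem stmt12 {V : Type*} [Finite V] (G : SimpleGraph V) (hconn : G.Connected)
    (h3ec : ∀ e ∈ G.edgeSet, ∀ f ∈ G.edgeSet, (G.deleteEdges {e, f}).Connected)
    (w : Sym2 V → ℝ) (hw : ∀ e : Sym2 V, 0 ≤ w e) :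
    ∃ T : SimpleGraph V, T ≤ G ∧ T.Connected ∧ T.IsAcyclic ∧
      ∑ᶠ e ∈ T.edgeSet, w e ≤ (2 / 3) * ∑ᶠ e ∈ G.edgeSet, w e := by
  obtain ⟨T, hTG, hT, hwT⟩ :=
    (isEdgeConnected_three_of_connected_deleteEdges_pair hconn h3ec).exists_isTree_le_mul_sum_le
      hconn w fun e _ ↦ hw e
  refine ⟨T, hTG, hT.connected, hT.isAcyclic, ?_⟩
  push_cast at hwT
  linarith
end
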